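/- Let F = ℤ/2ℤ and let X be a finite set. Let R_X = F[X]/({x² : x ∈ X}) and let F_X = R_X ⊗_F Ξ_X, where Ξ_X = ⊗_{x∈X} F[ξ_x,ξ_x⁻¹]/ξ_xF[ξ_x], with differential ∂(r⊗ξ) = Σ_{x∈X} (xr)⊗(ξ_x ξ). Then F_X is a chain complex of free R_X-modules whose homology is F concentrated in homological degree 0, i.e. F_X is a free R_X-resolution of the R_X-module F = R_X/({x : x ∈ X}). -/

import Mathlib

set_option synthInstance.maxHeartbeats 1000000
set_option maxHeartbeats 1000000

noncomputable section
open scoped TensorProduct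

abbrev F2 := ZMod 2

abbrev Rgen (X : Type) : Type :=
  MvPolynomial X F2 ⧸
    Ideal.span (Set.range fun x : X => (MvPolynomial.X x : MvPolynomial X F2) ^ 2)

def rgen {X : Type} (x : X) : Rgen X := Ideal.Quotient.mk _ (MvPolynomial.X x)

abbrev XiX (X : Type) : Type := (X →₀ ℕ) →₀ F2

def ximon {X : Type} (n : X →₀ ℕ) : XiX X := Finsupp.single n 1

def xiMul {X : Type} [DecidableEq X] (x : X) : XiX X →ₗ[F2] XiX X :=
  Finsupp.lsum F2 fun n =>
    if n x = 0 then (0 : F2 →ₗ[F2] XiX X)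
    else Finsupp.lsingle (n - Finsupp.single x 1)

/-- `F_X = R_X ⊗_F Ξ_X`. -/
abbrev FX (X : Type) : Type := Rgen X ⊗[F2] XiX X

/-- The differential `∂(r ⊗ ξ) = Σ_x (x·r) ⊗ (ξ_x·ξ)` on `F_X`. -/
def dFX (X : Type) [Fintype X] [DecidableEq X] : FX X →ₗ[F2] FX X :=
  ∑ x : X, TensorProduct.map (LinearMap.mulLeft F2 (rgen x)) (xiMul x)

/-!
`R_X` has the squarefree monomials `x_S` (`S ⊆ X`) as `F`-basis. Write `∂ = ∑ₓ ∂ₓ` with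
`∂ₓ = (x·) ⊗ ξₓ`. The `∂ₓ` commute pairwise and square to zero, so `∂² = 0` in characteristic 2.
Let `hₓ = ∂/∂x ⊗ ξₓ⁻¹`. Then `hₓ` commutes with `∂_y` for `y ≠ x`, and `∂ₓ hₓ + hₓ ∂ₓ` fixes
every basis element `x_S ⊗ ξ^{-n}` in which `x` is *active* (`x ∈ S` or `nₓ > 0`). Each `∂ₓ`
preserves the set of active variables, so choosing one active variable `m` per basis element and
putting `h = h_m` there gives `∂h + h∂ = id` on it, the terms with `x ≠ m` cancelling in pairs.
The only basis element without active variables is `1 ⊗ 1`, which maps to `1` under the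
augmentation; hence `∂h + h∂ + ι q = id`, and `F_X` is a resolution of `F`.
-/

theorem add_self_eq_zero_of_module_zmod_two {M : Type*} [AddCommMonoid M] [Module F2 M]
    (a : M) : a + a = 0 := by
  rw [← two_smul F2 a, show (2 : F2) = 0 from rfl, zero_smul]

theorem sum_sum_eq_zero_of_symm {ι M : Type*} [Fintype ι] [AddCommMonoid M] [Module F2 M]
    (f : ι → ι → M) (hsymm : ∀ i j, f i j = f j i) (hdiag : ∀ i, f i i = 0) :
    ∑ i, ∑ j, f i j = 0 := by
  rw [← Finset.sum_product' (f := f)]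
  refine Finset.sum_ninvolution Prod.swap (fun p => ?_) (fun p hp hswap => hp ?_)
    (fun _ => Finset.mem_univ _) Prod.swap_swap
  · rw [Prod.fst_swap, Prod.snd_swap, hsymm]; exact add_self_eq_zero_of_module_zmod_two _
  · obtain ⟨i, j⟩ := p
    obtain rfl : j = i := congrArg Prod.fst hswap
    exact hdiag j

section

open TensorProduct

variable {X : Type}

theorem rgen_mul_self (x : X) : rgen x * rgen x = 0 := by
  rw [rgen, ← map_mul, Ideal.Quotient.eq_zero_iff_mem, ← sq]
  exact Ideal.subset_span ⟨x, rfl⟩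

theorem span_range_X_sq_eq_span_monomial :
    Ideal.span (Set.range fun x : X => (MvPolynomial.X x : MvPolynomial X F2) ^ 2) =
      Ideal.span ((fun s => MvPolynomial.monomial s (1 : F2)) ''
        Set.range fun x => Finsupp.single x 2) := by
  simp_rw [Set.image, Set.range, MvPolynomial.X_pow_eq_monomial]
  congr 1; ext p; simp

theorem mkₐ_monomial_sum_single_eq_prod_rgen (S : Finset X) :
    Ideal.Quotient.mkₐ F2 _ (MvPolynomial.monomial (∑ x ∈ S, Finsupp.single x 1) (1 : F2)) =
      ∏ x ∈ S, rgen x := by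
  rw [MvPolynomial.monomial_sum_one, map_prod]; rfl

def xiInvMul (x : X) : XiX X →ₗ[F2] XiX X :=
  Finsupp.lmapDomain F2 F2 (· + Finsupp.single x 1)

theorem xiInvMul_ximon (x : X) (n : X →₀ ℕ) :
    xiInvMul x (ximon n) = ximon (n + Finsupp.single x 1) :=
  Finsupp.mapDomain_single

theorem Finsupp.add_single_tsub_single_comm {x y : X} (hxy : x ≠ y) (n : X →₀ ℕ) :
    n + single y 1 - single x 1 = n - single x 1 + single y 1 := by
  classical
  ext z
  simp only [coe_tsub, coe_add, Pi.sub_apply, Pi.add_apply, single_apply]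
  split_ifs <;> first | omega | simp_all

def augRgen : Rgen X →ₐ[F2] F2 :=
  Ideal.Quotient.liftₐ _ (MvPolynomial.aeval fun _ => 0) fun p hp => by
    refine (Ideal.span_le (I := RingHom.ker _)).mpr ?_ hp
    rintro _ ⟨x, rfl⟩
    simp

theorem augRgen_rgen (x : X) : augRgen (rgen x) = 0 :=
  MvPolynomial.aeval_X (R := F2) _ x

def augFX : FX X →ₗ[F2] F2 :=
  TensorProduct.lid F2 F2 ∘ₗ TensorProduct.map augRgen.toLinearMap (Finsupp.lapply 0)

theorem augFX_tmul (r : Rgen X) (ξ : XiX X) : augFX (r ⊗ₜ ξ) = augRgen r * ξ 0 := rfl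

variable [DecidableEq X]

theorem finsetSum_single_one_apply (S : Finset X) (x : X) :
    (∑ y ∈ S, Finsupp.single y 1 : X →₀ ℕ) x = if x ∈ S then 1 else 0 := by
  simp [Finsupp.finsetSum_apply, Finsupp.single_apply]

theorem rgen_mul_prod_rgen (x : X) (S : Finset X) :
    rgen x * ∏ y ∈ S, rgen y = if x ∈ S then 0 else ∏ y ∈ insert x S, rgen y := by
  split_ifs with hx
  · rw [← Finset.mul_prod_erase S _ hx, ← mul_assoc, rgen_mul_self, zero_mul]
  · rw [Finset.prod_insert hx]

theorem rgen_mul_mem_span_prod_rgen (x : X) {r : Rgen X}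
    (hr : r ∈ Submodule.span F2 (Set.range fun S : Finset X => ∏ y ∈ S, rgen y)) :
    rgen x * r ∈ Submodule.span F2 (Set.range fun S : Finset X => ∏ y ∈ S, rgen y) := by
  refine Submodule.span_induction (fun _ ⟨S, hS⟩ => ?_) (by simp) (fun _ _ _ _ ha hb => ?_)
    (fun c _ _ ha => ?_) hr
  · rw [← hS, rgen_mul_prod_rgen]
    split_ifs
    · exact Submodule.zero_mem _
    · exact Submodule.subset_span ⟨_, rfl⟩
  · rw [mul_add]; exact Submodule.add_mem _ ha hb
  · rw [mul_smul_comm]; exact Submodule.smul_mem _ c ha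

theorem top_le_span_prod_rgen :
    ⊤ ≤ Submodule.span F2 (Set.range fun S : Finset X => ∏ x ∈ S, rgen x) := by
  rintro r -
  obtain ⟨p, rfl⟩ := Ideal.Quotient.mk_surjective r
  induction p using MvPolynomial.induction_on with
  | C a =>
    have : Ideal.Quotient.mk _ (MvPolynomial.C a) = a • ∏ x ∈ (∅ : Finset X), rgen x := by
      rw [Finset.prod_empty]; exact Algebra.algebraMap_eq_smul_one (A := Rgen X) a
    rw [this]
    exact Submodule.smul_mem _ a (Submodule.subset_span ⟨∅, rfl⟩)
  | add p q hp hq => rw [map_add]; exact Submodule.add_mem _ hp hq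
  | mul_X p x hp => rw [map_mul, mul_comm]; exact rgen_mul_mem_span_prod_rgen x hp

theorem xiMul_ximon (x : X) (n : X →₀ ℕ) :
    xiMul x (ximon n) = if n x = 0 then 0 else ximon (n - Finsupp.single x 1) := by
  rw [ximon, xiMul, Finsupp.lsum_single]
  split_ifs <;> simp [ximon]

theorem xiMul_comp_xiMul (x y : X) : xiMul x ∘ₗ xiMul y = xiMul y ∘ₗ xiMul x := by
  refine Finsupp.basisSingleOne.ext fun n => ?_
  rcases eq_or_ne x y with rfl | hxy
  · rfl
  change xiMul x (xiMul y (ximon n)) = xiMul y (xiMul x (ximon n))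
  by_cases hx : n x = 0 <;> by_cases hy : n y = 0 <;>
    simp [hx, hy, xiMul_ximon, hxy, hxy.symm, tsub_right_comm]

theorem xiMul_comp_xiInvMul {x y : X} (hxy : x ≠ y) :
    xiMul x ∘ₗ xiInvMul y = xiInvMul y ∘ₗ xiMul x := by
  refine Finsupp.basisSingleOne.ext fun n => ?_
  change xiMul x (xiInvMul y (ximon n)) = xiInvMul y (xiMul x (ximon n))
  by_cases hx : n x = 0 <;>
    simp [hx, xiMul_ximon, xiInvMul_ximon, hxy, Finsupp.add_single_tsub_single_comm hxy]

theorem xiMul_xiInvMul (x : X) (ξ : XiX X) : xiMul x (xiInvMul x ξ) = ξ := by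
  suffices xiMul x ∘ₗ xiInvMul x = LinearMap.id from LinearMap.congr_fun this ξ
  refine Finsupp.basisSingleOne.ext fun n => ?_
  change xiMul x (xiInvMul x (ximon n)) = ximon n
  simp [xiMul_ximon, xiInvMul_ximon]

theorem xiInvMul_xiMul_ximon {x : X} {n : X →₀ ℕ} (hn : n x ≠ 0) :
    xiInvMul x (xiMul x (ximon n)) = ximon n := by
  rw [xiMul_ximon, if_neg hn, xiInvMul_ximon, tsub_add_cancel_of_le]
  simpa [Finsupp.single_le_iff, Nat.one_le_iff_ne_zero] using hn

theorem augFX_tmul_ximon (r : Rgen X) (n : X →₀ ℕ) :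
    augFX (r ⊗ₜ ximon n) = if n = 0 then augRgen r else 0 := by
  rw [augFX_tmul, ximon, Finsupp.single_apply]
  split_ifs <;> simp_all

theorem augFX_one_tmul_ximon_zero : augFX (1 ⊗ₜ ximon (0 : X →₀ ℕ)) = 1 := by
  simp [augFX_tmul_ximon]

def dTerm (x : X) : FX X →ₗ[F2] FX X :=
  TensorProduct.map (LinearMap.mulLeft F2 (rgen x)) (xiMul x)

theorem dTerm_tmul (x : X) (r : Rgen X) (ξ : XiX X) :
    dTerm x (r ⊗ₜ ξ) = (rgen x * r) ⊗ₜ xiMul x ξ := rfl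

theorem dTerm_comp_dTerm_self (x : X) : dTerm x ∘ₗ dTerm x = 0 := by
  rw [dTerm, ← TensorProduct.map_comp, ← LinearMap.mulLeft_mul, rgen_mul_self,
    LinearMap.mulLeft_zero_eq_zero, TensorProduct.map_zero_left]

theorem dTerm_comp_dTerm_comm (x y : X) : dTerm x ∘ₗ dTerm y = dTerm y ∘ₗ dTerm x := by
  rw [dTerm, dTerm, ← TensorProduct.map_comp, ← TensorProduct.map_comp, ← LinearMap.mulLeft_mul,
    ← LinearMap.mulLeft_mul, mul_comm, xiMul_comp_xiMul]

theorem dTerm_eq_smul_baseChange (x : X) (z : FX X) :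
    dTerm x z = rgen x • (xiMul x).baseChange (Rgen X) z := by
  induction z using TensorProduct.induction_on with
  | zero => simp
  | tmul r ξ => simp [dTerm, TensorProduct.smul_tmul']
  | add z w hz hw => simp [hz, hw]

def activeVars (S : Finset X) (n : X →₀ ℕ) : Finset X := S ∪ n.support

theorem activeVars_insert_tsub {x : X} {S : Finset X} {n : X →₀ ℕ} (hn : n x ≠ 0) :
    activeVars (insert x S) (n - Finsupp.single x 1) = activeVars S n := by
  ext y
  by_cases hy : y = x
  · subst hy; simp [activeVars, hn]
  · simp [activeVars, hy]

variable [Fintype X]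

theorem linearIndependent_prod_rgen :
    LinearIndependent F2 fun S : Finset X => ∏ x ∈ S, rgen x := by
  rw [Fintype.linearIndependent_iff]
  intro g hg S₀
  set e : Finset X → X →₀ ℕ := fun S => ∑ x ∈ S, Finsupp.single x 1
  have he : Function.Injective e := fun S T hST => by
    ext x; have := DFunLike.congr_fun hST x
    simp only [e, finsetSum_single_one_apply] at this; split_ifs at this <;> tauto
  set p : MvPolynomial X F2 := ∑ S, MvPolynomial.monomial (e S) (g S)
  -- `p` lies in a monomial ideal whose monomials all have an exponent `≥ 2`; the `e S` have none.
  have hmem : p ∈ Ideal.span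
      ((fun s => MvPolynomial.monomial s (1 : F2)) '' Set.range fun x => Finsupp.single x 2) := by
    rw [← span_range_X_sq_eq_span_monomial, ← Ideal.Quotient.eq_zero_iff_mem,
      ← Ideal.Quotient.mkₐ_eq_mk F2, ← hg, map_sum]
    refine Finset.sum_congr rfl fun S _ => ?_
    rw [← mkₐ_monomial_sum_single_eq_prod_rgen, ← map_smul, MvPolynomial.smul_monomial,
      smul_eq_mul, mul_one]
  have hcoeff : p.coeff (e S₀) = g S₀ := by
    simp [p, MvPolynomial.coeff_sum, MvPolynomial.coeff_monomial, he.eq_iff]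
  by_contra hne
  rw [← hcoeff, ← ne_eq, ← MvPolynomial.mem_support_iff] at hne
  obtain ⟨_, ⟨x, rfl⟩, hle⟩ := MvPolynomial.mem_ideal_span_monomial_image.mp hmem _ hne
  have hx := hle x
  simp only [e, Finsupp.single_eq_same, finsetSum_single_one_apply] at hx
  split_ifs at hx <;> omega

def basisRgen : Module.Basis (Finset X) F2 (Rgen X) :=
  Module.Basis.mk linearIndependent_prod_rgen top_le_span_prod_rgen

theorem basisRgen_apply (S : Finset X) : basisRgen S = ∏ x ∈ S, rgen x :=
  Module.Basis.mk_apply _ _ S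

theorem basisRgen_empty : basisRgen (∅ : Finset X) = 1 := by
  rw [basisRgen_apply, Finset.prod_empty]

theorem rgen_mul_basisRgen (x : X) (S : Finset X) :
    rgen x * basisRgen S = if x ∈ S then 0 else basisRgen (insert x S) := by
  simp only [basisRgen_apply, rgen_mul_prod_rgen]

theorem augRgen_basisRgen (S : Finset X) : augRgen (basisRgen S) = if S = ∅ then 1 else 0 := by
  rw [basisRgen_apply, map_prod]
  split_ifs with hS
  · simp [hS]
  · obtain ⟨x, hx⟩ := Finset.nonempty_iff_ne_empty.mpr hS
    exact Finset.prod_eq_zero hx (augRgen_rgen x)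

def pderivRgen (x : X) : Rgen X →ₗ[F2] Rgen X :=
  basisRgen.constr F2 fun S => if x ∈ S then basisRgen (S.erase x) else 0

theorem pderivRgen_basisRgen (x : X) (S : Finset X) :
    pderivRgen x (basisRgen S) = if x ∈ S then basisRgen (S.erase x) else 0 :=
  Module.Basis.constr_basis _ _ _ _

theorem mulLeft_comp_pderivRgen {x y : X} (hxy : x ≠ y) :
    LinearMap.mulLeft F2 (rgen x) ∘ₗ pderivRgen y =
      pderivRgen y ∘ₗ LinearMap.mulLeft F2 (rgen x) := by
  refine basisRgen.ext fun S => ?_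
  by_cases hx : x ∈ S <;> by_cases hy : y ∈ S <;>
    simp [hx, hy, hxy, hxy.symm, rgen_mul_basisRgen, pderivRgen_basisRgen,
      Finset.erase_insert_of_ne hxy]

theorem rgen_mul_pderivRgen_add_pderivRgen_rgen_mul (x : X) (r : Rgen X) :
    rgen x * pderivRgen x r + pderivRgen x (rgen x * r) = r := by
  suffices LinearMap.mulLeft F2 (rgen x) ∘ₗ pderivRgen x +
      pderivRgen x ∘ₗ LinearMap.mulLeft F2 (rgen x) = LinearMap.id from
    LinearMap.congr_fun this r
  refine basisRgen.ext fun S => ?_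
  by_cases hx : x ∈ S <;>
    simp [hx, rgen_mul_basisRgen, pderivRgen_basisRgen, Finset.insert_erase]

def hTerm (x : X) : FX X →ₗ[F2] FX X :=
  TensorProduct.map (pderivRgen x) (xiInvMul x)

theorem hTerm_tmul (x : X) (r : Rgen X) (ξ : XiX X) :
    hTerm x (r ⊗ₜ ξ) = pderivRgen x r ⊗ₜ xiInvMul x ξ := rfl

theorem dTerm_comp_hTerm {x y : X} (hxy : x ≠ y) : dTerm x ∘ₗ hTerm y = hTerm y ∘ₗ dTerm x := by
  rw [dTerm, hTerm, ← TensorProduct.map_comp, ← TensorProduct.map_comp,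
    mulLeft_comp_pderivRgen hxy, xiMul_comp_xiInvMul hxy]

theorem dFX_eq_sum_dTerm : dFX X = ∑ x, dTerm x := rfl

theorem dFX_comp_dFX : dFX X ∘ₗ dFX X = 0 := by
  rw [dFX_eq_sum_dTerm, ← Module.End.mul_eq_comp, Finset.sum_mul_sum]
  exact sum_sum_eq_zero_of_symm _ dTerm_comp_dTerm_comm dTerm_comp_dTerm_self

theorem dFX_smul (r : Rgen X) (z : FX X) : dFX X (r • z) = r • dFX X z := by
  simp only [dFX_eq_sum_dTerm, LinearMap.sum_apply, dTerm_eq_smul_baseChange, Finset.smul_sum,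
    LinearMap.map_smul, smul_comm r]

theorem augFX_comp_dFX : augFX ∘ₗ dFX X = 0 := by
  refine TensorProduct.ext' fun r ξ => ?_
  simp [dFX_eq_sum_dTerm, dTerm_tmul, augFX_tmul, augRgen_rgen]

theorem dFX_one_tmul_ximon_zero : dFX X (1 ⊗ₜ ximon 0) = 0 := by
  simp [dFX_eq_sum_dTerm, dTerm_tmul, xiMul_ximon]

def basisFX : Module.Basis (Finset X × (X →₀ ℕ)) F2 (FX X) :=
  basisRgen.tensorProduct Finsupp.basisSingleOne

theorem basisFX_apply (S : Finset X) (n : X →₀ ℕ) :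
    basisFX (S, n) = basisRgen S ⊗ₜ ximon n :=
  Module.Basis.tensorProduct_apply _ _ _ _

theorem dTerm_hTerm_add_hTerm_dTerm_self {x : X} {S : Finset X} {n : X →₀ ℕ}
    (hx : x ∈ activeVars S n) :
    dTerm x (hTerm x (basisFX (S, n))) + hTerm x (dTerm x (basisFX (S, n))) = basisFX (S, n) := by
  rw [basisFX_apply, hTerm_tmul, dTerm_tmul, dTerm_tmul, hTerm_tmul]
  by_cases hn : n x = 0
  · have hS : x ∈ S := by simpa [activeVars, hn] using hx
    have hr : rgen x * pderivRgen x (basisRgen S) = basisRgen S := by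
      simpa [rgen_mul_basisRgen, hS] using
        rgen_mul_pderivRgen_add_pderivRgen_rgen_mul x (basisRgen S)
    rw [xiMul_ximon, if_pos hn, map_zero, tmul_zero, add_zero, xiMul_xiInvMul, hr]
  · rw [xiInvMul_xiMul_ximon hn, xiMul_xiInvMul, ← add_tmul,
      rgen_mul_pderivRgen_add_pderivRgen_rgen_mul]

def homotopyFX : FX X →ₗ[F2] FX X :=
  basisFX.constr F2 fun p =>
    if h : (activeVars p.1 p.2).Nonempty then hTerm h.choose (basisFX p) else 0

theorem homotopyFX_basisFX {S : Finset X} {n : X →₀ ℕ} {A : Finset X}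
    (hA : activeVars S n = A) (h : A.Nonempty) :
    homotopyFX (basisFX (S, n)) = hTerm h.choose (basisFX (S, n)) := by
  subst hA
  rw [homotopyFX, Module.Basis.constr_basis, dif_pos h]

theorem homotopyFX_dTerm_basisFX (x : X) {S : Finset X} {n : X →₀ ℕ}
    (h : (activeVars S n).Nonempty) :
    homotopyFX (dTerm x (basisFX (S, n))) = hTerm h.choose (dTerm x (basisFX (S, n))) := by
  rw [basisFX_apply, dTerm_tmul, rgen_mul_basisRgen, xiMul_ximon]
  by_cases hS : x ∈ S
  · simp [hS]
  by_cases hn : n x = 0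
  · simp [hn]
  · rw [if_neg hS, if_neg hn, ← basisFX_apply, homotopyFX_basisFX (activeVars_insert_tsub hn) h]

theorem dFX_homotopyFX_add_homotopyFX_dFX {S : Finset X} {n : X →₀ ℕ}
    (h : (activeVars S n).Nonempty) :
    dFX X (homotopyFX (basisFX (S, n))) + homotopyFX (dFX X (basisFX (S, n))) =
      basisFX (S, n) := by
  rw [homotopyFX_basisFX rfl h, dFX_eq_sum_dTerm, LinearMap.sum_apply, LinearMap.sum_apply,
    map_sum, ← Finset.sum_add_distrib]
  simp_rw [homotopyFX_dTerm_basisFX _ h]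
  rw [Finset.sum_eq_single h.choose]
  · exact dTerm_hTerm_add_hTerm_dTerm_self h.choose_spec
  · intro x _ hxm
    rw [← LinearMap.comp_apply, dTerm_comp_hTerm hxm]
    exact add_self_eq_zero_of_module_zmod_two _
  · simp

theorem dFX_homotopyFX_add_homotopyFX_dFX_add_augFX (z : FX X) :
    dFX X (homotopyFX z) + homotopyFX (dFX X z) + augFX z • (1 ⊗ₜ ximon 0) = z := by
  suffices dFX X ∘ₗ homotopyFX + homotopyFX ∘ₗ dFX X + augFX.smulRight (1 ⊗ₜ ximon 0) =
      LinearMap.id from LinearMap.congr_fun this z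
  refine basisFX.ext fun ⟨S, n⟩ => ?_
  simp only [LinearMap.add_apply, LinearMap.comp_apply, LinearMap.smulRight_apply,
    LinearMap.id_apply]
  by_cases h : (activeVars S n).Nonempty
  · have hq : augFX (basisFX (S, n)) = 0 := by
      rw [basisFX_apply, augFX_tmul_ximon, augRgen_basisRgen]
      split_ifs with hn hS
      · subst hn hS; simp [activeVars] at h
      all_goals rfl
    rw [dFX_homotopyFX_add_homotopyFX_dFX h, hq, zero_smul, add_zero]
  · obtain ⟨rfl, rfl⟩ : S = ∅ ∧ n = 0 := by simpa [activeVars] using h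
    rw [homotopyFX, Module.Basis.constr_basis, dif_neg h, basisFX_apply, basisRgen_empty,
      dFX_one_tmul_ximon_zero, augFX_one_tmul_ximon_zero]
    simp

theorem exists_dFX_eq_of_mem_ker {z : FX X} (hz : z ∈ LinearMap.ker (dFX X))
    (hq : augFX z = 0) : ∃ w, dFX X w = z :=
  ⟨homotopyFX z, by
    simpa [LinearMap.mem_ker.mp hz, hq] using dFX_homotopyFX_add_homotopyFX_dFX_add_augFX z⟩

end

theorem stmt2 (X : Type) [Fintype X] [DecidableEq X] :
    -- ∂² = 0
    (dFX X).comp (dFX X) = 0 ∧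
    -- ∂ is R_X-linear (R_X acting on the left tensor factor)
    (∀ (r : Rgen X) (m : FX X), dFX X (r • m) = r • dFX X m) ∧
    -- F_X consists of free R_X-modules
    Module.Free (Rgen X) (FX X) ∧
    -- the augmentation q to F = R_X/({x}) exhibits F_X as a resolution of F
    (∃ q : FX X →ₗ[F2] F2,
      (∃ ε : Rgen X →ₐ[F2] F2, (∀ x : X, ε (rgen x) = 0) ∧
        ∀ (r : Rgen X) (n : X →₀ ℕ),
          q (r ⊗ₜ[F2] ximon n) = if n = 0 then ε r else 0) ∧
      q.comp (dFX X) = 0 ∧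
      Function.Surjective q ∧
      (∃ z : FX X, z ∈ LinearMap.ker (dFX X) ∧ q z = 1) ∧
      ∀ z : FX X, z ∈ LinearMap.ker (dFX X) → q z = 0 → ∃ w, dFX X w = z) :=
  ⟨dFX_comp_dFX, dFX_smul, inferInstance, augFX, ⟨augRgen, augRgen_rgen, augFX_tmul_ximon⟩,
    augFX_comp_dFX, fun c => ⟨c • (1 ⊗ₜ ximon 0), by simp [augFX_one_tmul_ximon_zero]⟩,
    ⟨1 ⊗ₜ ximon 0, dFX_one_tmul_ximon_zero, augFX_one_tmul_ximon_zero⟩,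
    fun _ hz hq => exists_dFX_eq_of_mem_ker hz hq⟩
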